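/- arXiv:1806.05763 — 2 statements merged into one kernel-verified Lean document; each statement's English description precedes it below -/
import Mathlib

section
/- For every ε > 0 there exists a constant K_ε > 0 such that for all w, z ∈ ℝ, |sin z (1 - cos w) - sin w (1 - cos z)| ≤ K_ε [sin²(w/2)·(1 + cos z)·2 + sin²(z/2)·(1 + cos w)·2] + ε (1 - cos w)(1 - cos z). -/
open Real

/-- For every `ε > 0` there is `K_ε > 0` such that for all real `w, z`:
`|sin z (1-cos w) - sin w (1-cos z)|
  ≤ K_ε [2 sin²(w/2)(1+cos z) + 2 sin²(z/2)(1+cos w)] + ε (1-cos w)(1-cos z)`. -/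
theorem sin_cos_interaction_bound :
    ∀ ε : ℝ, 0 < ε → ∃ K : ℝ, 0 < K ∧ ∀ w z : ℝ,
      |Real.sin z * (1 - Real.cos w) - Real.sin w * (1 - Real.cos z)|
        ≤ K * (Real.sin (w/2)^2 * (1 + Real.cos z) * 2
              + Real.sin (z/2)^2 * (1 + Real.cos w) * 2)
          + ε * (1 - Real.cos w) * (1 - Real.cos z) := by
  intro ε hε
  refine ⟨1/(2*ε), by positivity, fun w z => ?_⟩
  have hw : Real.sin w = 2 * Real.sin (w/2) * Real.cos (w/2) := by
    rw [show w = 2*(w/2) by ring, Real.sin_two_mul]; ring_nf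
  have hz : Real.sin z = 2 * Real.sin (z/2) * Real.cos (z/2) := by
    rw [show z = 2*(z/2) by ring, Real.sin_two_mul]; ring_nf
  have hcw : Real.cos w = 2 * Real.cos (w/2)^2 - 1 := by
    rw [show w = 2*(w/2) by ring, Real.cos_two_mul]; ring_nf
  have hcz : Real.cos z = 2 * Real.cos (z/2)^2 - 1 := by
    rw [show z = 2*(z/2) by ring, Real.cos_two_mul]; ring_nf
  have pw := Real.sin_sq_add_cos_sq (w/2)
  have pz := Real.sin_sq_add_cos_sq (z/2)
  have h1w : 1 - Real.cos w = 2 * Real.sin (w/2)^2 := by rw [hcw]; linarith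
  have h1z : 1 - Real.cos z = 2 * Real.sin (z/2)^2 := by rw [hcz]; linarith
  have h2w : 1 + Real.cos w = 2 * Real.cos (w/2)^2 := by rw [hcw]; ring
  have h2z : 1 + Real.cos z = 2 * Real.cos (z/2)^2 := by rw [hcz]; ring
  set sa := Real.sin (w/2)
  set ca := Real.cos (w/2)
  set sb := Real.sin (z/2)
  set cb := Real.cos (z/2)
  rw [hw, hz, h1w, h1z, h2w, h2z]
  have h2e : (0:ℝ) < 2*ε := by positivity
  rw [← mul_le_mul_iff_right₀ h2e]
  have hexp : 2*ε*(1/(2*ε) * (sa^2 * (2*cb^2) * 2 + sb^2 * (2*ca^2) * 2)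
        + ε * (2*sa^2) * (2*sb^2))
      = (sa^2 * (2*cb^2) * 2 + sb^2 * (2*ca^2) * 2) + 8*ε^2*(sa^2*sb^2) := by
    field_simp; ring
  rw [hexp]
  rcases abs_cases (2 * sb * cb * (2 * sa ^ 2) - 2 * sa * ca * (2 * sb ^ 2)) with
    ⟨h, _⟩ | ⟨h, _⟩ <;> rw [h] <;>
  nlinarith [sq_nonneg (sa*cb - ε*(sa*sb)), sq_nonneg (sa*cb + ε*(sa*sb)),
    sq_nonneg (ca*sb - ε*(sa*sb)), sq_nonneg (ca*sb + ε*(sa*sb))]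
end

section
/- Let the semilinear system of the previous context hold. Then the 1-form ω := [ (1-cos w)/8 + ((1+cos w)/32)(2v² + v⁴) ] p dX − [ (1-cos z)/8 + ((1+cos z)/32)(2v² + v⁴) ] q dY is closed, i.e. ∂_Y of the dX-coefficient equals −∂_X of the (−dY)-coefficient: ∂_Y{[(1-cos w)/8 + ((1+cos w)/32)(2v²+v⁴)]p} = −∂_X{[(1-cos z)/8 + ((1+cos z)/32)(2v²+v⁴)]q}. -/
set_option maxHeartbeats 2000000 in
/-- For smooth solutions of the semilinear characteristic system, the 1-form
`[(1-cos w)/8 + ((1+cos w)/32)(2v²+v⁴)] p dX − [(1-cos z)/8 + ((1+cos z)/32)(2v²+v⁴)] q dY`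
is closed. -/
theorem energy_one_form_closed
    (c : ℝ → ℝ) (hc : ContDiff ℝ (⊤ : ℕ∞) c) (hcpos : ∀ y, 0 < c y)
    (p q w z v : ℝ → ℝ → ℝ)
    (hp : ContDiff ℝ (⊤ : ℕ∞) (fun P : ℝ × ℝ => p P.1 P.2))
    (hq : ContDiff ℝ (⊤ : ℕ∞) (fun P : ℝ × ℝ => q P.1 P.2))
    (hw : ContDiff ℝ (⊤ : ℕ∞) (fun P : ℝ × ℝ => w P.1 P.2))
    (hz : ContDiff ℝ (⊤ : ℕ∞) (fun P : ℝ × ℝ => z P.1 P.2))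
    (hv : ContDiff ℝ (⊤ : ℕ∞) (fun P : ℝ × ℝ => v P.1 P.2))
    (hwY : ∀ X Y, deriv (fun Y' => w X Y') Y
      = deriv c (v X Y) / (8 * c (v X Y) ^ 2)
          * (Real.cos (z X Y) - Real.cos (w X Y)) * q X Y
        - q X Y / (8 * c (v X Y)) * (v X Y + v X Y ^ 3)
          * (1 + Real.cos (z X Y)) * (1 + Real.cos (w X Y)))
    (hzX : ∀ X Y, deriv (fun X' => z X' Y) X
      = deriv c (v X Y) / (8 * c (v X Y) ^ 2)
          * (Real.cos (w X Y) - Real.cos (z X Y)) * p X Y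
        - p X Y / (8 * c (v X Y)) * (v X Y + v X Y ^ 3)
          * (1 + Real.cos (z X Y)) * (1 + Real.cos (w X Y)))
    (hpY : ∀ X Y, deriv (fun Y' => p X Y') Y
      = deriv c (v X Y) / (8 * c (v X Y) ^ 2)
          * (Real.sin (z X Y) - Real.sin (w X Y)) * (p X Y * q X Y)
        - p X Y * q X Y / (8 * c (v X Y)) * Real.sin (w X Y)
          * (v X Y + v X Y ^ 3) * (1 + Real.cos (z X Y)))
    (hqX : ∀ X Y, deriv (fun X' => q X' Y) X
      = deriv c (v X Y) / (8 * c (v X Y) ^ 2)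
          * (Real.sin (w X Y) - Real.sin (z X Y)) * (p X Y * q X Y)
        - p X Y * q X Y / (8 * c (v X Y)) * Real.sin (z X Y)
          * (v X Y + v X Y ^ 3) * (1 + Real.cos (w X Y)))
    (hvX : ∀ X Y, deriv (fun X' => v X' Y) X
      = p X Y / (4 * c (v X Y)) * Real.sin (w X Y))
    (hvY : ∀ X Y, deriv (fun Y' => v X Y') Y
      = q X Y / (4 * c (v X Y)) * Real.sin (z X Y)) :
    ∀ X Y : ℝ,
      deriv (fun Y' => ((1 - Real.cos (w X Y')) / 8
          + (1 + Real.cos (w X Y')) / 32 * (2 * v X Y' ^ 2 + v X Y' ^ 4))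
          * p X Y') Y
      = -(deriv (fun X' => ((1 - Real.cos (z X' Y)) / 8
          + (1 + Real.cos (z X' Y)) / 32 * (2 * v X' Y ^ 2 + v X' Y ^ 4))
          * q X' Y) X) := by

  intro X Y
  have hYline : Differentiable ℝ (fun Y' : ℝ => ((X, Y') : ℝ × ℝ)) :=
    (differentiable_const _).prodMk differentiable_id
  have hXline : Differentiable ℝ (fun X' : ℝ => ((X', Y) : ℝ × ℝ)) :=
    differentiable_id.prodMk (differentiable_const _)
  have hW : HasDerivAt (fun Y' => w X Y') (deriv (fun Y' => w X Y') Y) Y :=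
    (((hw.differentiable (by simp)).comp hYline) Y).hasDerivAt
  have hP : HasDerivAt (fun Y' => p X Y') (deriv (fun Y' => p X Y') Y) Y :=
    (((hp.differentiable (by simp)).comp hYline) Y).hasDerivAt
  have hV : HasDerivAt (fun Y' => v X Y') (deriv (fun Y' => v X Y') Y) Y :=
    (((hv.differentiable (by simp)).comp hYline) Y).hasDerivAt
  have hZ : HasDerivAt (fun X' => z X' Y) (deriv (fun X' => z X' Y) X) X :=
    (((hz.differentiable (by simp)).comp hXline) X).hasDerivAt
  have hQ : HasDerivAt (fun X' => q X' Y) (deriv (fun X' => q X' Y) X) X :=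
    (((hq.differentiable (by simp)).comp hXline) X).hasDerivAt
  have hV2 : HasDerivAt (fun X' => v X' Y) (deriv (fun X' => v X' Y) X) X :=
    (((hv.differentiable (by simp)).comp hXline) X).hasDerivAt
  have hL : HasDerivAt (fun Y' => ((1 - Real.cos (w X Y')) / 8
      + (1 + Real.cos (w X Y')) / 32 * (2 * v X Y' ^ 2 + v X Y' ^ 4)) * p X Y')
      ((((0 - (-Real.sin (w X Y) * deriv (fun Y' => w X Y') Y)) / 8
        + ((0 + (-Real.sin (w X Y) * deriv (fun Y' => w X Y') Y)) / 32
            * (2 * v X Y ^ 2 + v X Y ^ 4)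
          + (1 + Real.cos (w X Y)) / 32
            * (2 * (↑(2:ℕ) * v X Y ^ (2-1) * deriv (fun Y' => v X Y') Y)
              + ↑(4:ℕ) * v X Y ^ (4-1) * deriv (fun Y' => v X Y') Y)))
        * p X Y
        + ((1 - Real.cos (w X Y)) / 8
          + (1 + Real.cos (w X Y)) / 32 * (2 * v X Y ^ 2 + v X Y ^ 4))
          * deriv (fun Y' => p X Y') Y)) Y := by
    exact ((((hasDerivAt_const Y (1:ℝ)).sub hW.cos).div_const 8).add
      ((((hasDerivAt_const Y (1:ℝ)).add hW.cos).div_const 32).mul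
        (((hV.pow 2).const_mul 2).add (hV.pow 4)))).mul hP
  have hR : HasDerivAt (fun X' => ((1 - Real.cos (z X' Y)) / 8
      + (1 + Real.cos (z X' Y)) / 32 * (2 * v X' Y ^ 2 + v X' Y ^ 4)) * q X' Y)
      ((((0 - (-Real.sin (z X Y) * deriv (fun X' => z X' Y) X)) / 8
        + ((0 + (-Real.sin (z X Y) * deriv (fun X' => z X' Y) X)) / 32
            * (2 * v X Y ^ 2 + v X Y ^ 4)
          + (1 + Real.cos (z X Y)) / 32
            * (2 * (↑(2:ℕ) * v X Y ^ (2-1) * deriv (fun X' => v X' Y) X)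
              + ↑(4:ℕ) * v X Y ^ (4-1) * deriv (fun X' => v X' Y) X)))
        * q X Y
        + ((1 - Real.cos (z X Y)) / 8
          + (1 + Real.cos (z X Y)) / 32 * (2 * v X Y ^ 2 + v X Y ^ 4))
          * deriv (fun X' => q X' Y) X)) X := by
    exact ((((hasDerivAt_const X (1:ℝ)).sub hZ.cos).div_const 8).add
      ((((hasDerivAt_const X (1:ℝ)).add hZ.cos).div_const 32).mul
        (((hV2.pow 2).const_mul 2).add (hV2.pow 4)))).mul hQ
  rw [hL.deriv, hR.deriv, hwY, hvY, hpY, hzX, hvX, hqX]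
  have hcne : c (v X Y) ≠ 0 := (hcpos _).ne'
  push_cast
  field_simp
  ring
end
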